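/- arXiv:0912.0283 — 3 statements merged into one kernel-verified Lean document; each statement's English description precedes it below -/
import Mathlib

section
/- Let X be a finite topological space and let Good be a collection of locally closed subsets of X such that: (1) for every x ∈ X, the closure of {x} belongs to Good; (2) whenever Y ⊆ Z are locally closed with Z \ Y locally closed, and two of Y, Z, Z \ Y belong to Good, so does the third; (3) Good is closed under finite disjoint unions of relatively open pieces. Then every locally closed subset of X belongs to Good. -/
/-!
A locally closed set `S` is the difference of the closed sets `closure S` and `closure S \ S`,
so by the two-out-of-three property it suffices to treat closed sets, by induction on inclusion.
A nonempty closed set `S` of a finite space contains a point `x` whose closure is maximal among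
closures of points of `S`; then `x ∉ closure (S \ closure {x})`, so `T = S \ closure {x}` is a
locally closed set with `closure T` and `closure T \ T` closed and strictly smaller than `S`,
and `S` is glued from `closure {x}` and `T`.
-/

open Set

theorem IsLocallyClosed.isClosed_closure_sdiff {X : Type*} [TopologicalSpace X] {S : Set X}
    (hS : IsLocallyClosed S) : IsClosed (closure S \ S) := by
  simpa [coborder] using hS.isOpen_coborder.isClosed_compl

theorem Set.Finite.exists_notMem_closure_sdiff_closure_singleton {X : Type*}
    [TopologicalSpace X] {S : Set X} (hS : S.Finite) (hne : S.Nonempty) :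
    ∃ x ∈ S, x ∉ closure (S \ closure {x}) := by
  obtain ⟨x, hxS, hxmax⟩ := hS.exists_maximalFor (fun y : X => closure {y}) S hne
  refine ⟨x, hxS, fun hx => ?_⟩
  rw [← biUnion_of_singleton (S \ closure {x}), hS.sdiff.closure_biUnion] at hx
  obtain ⟨y, ⟨hyS, hyx⟩, hxy⟩ := mem_iUnion₂.1 hx
  exact hyx (hxmax hyS (specializes_iff_mem_closure.2 hxy).closure_subset (subset_closure rfl))

theorem mem_of_closure_mem_of_closure_sdiff_mem {X : Type*} [TopologicalSpace X]
    {Good : Set (Set X)}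
    (sdiff_mem : ∀ Y Z : Set X, Y ⊆ Z → IsLocallyClosed Y → IsLocallyClosed Z →
      IsLocallyClosed (Z \ Y) → Y ∈ Good → Z ∈ Good → Z \ Y ∈ Good)
    {S : Set X} (hS : IsLocallyClosed S) (hC : closure S ∈ Good) (hD : closure S \ S ∈ Good) :
    S ∈ Good := by
  have hCD : closure S \ (closure S \ S) = S := sdiff_sdiff_cancel_left subset_closure
  rw [← hCD]
  exact sdiff_mem _ _ sdiff_subset hS.isClosed_closure_sdiff.isLocallyClosed
    isClosed_closure.isLocallyClosed (by rwa [hCD]) hD hC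

theorem mem_of_isClosed {X : Type*} [TopologicalSpace X] [Finite X] {Good : Set (Set X)}
    (empty_mem : ∅ ∈ Good) (closure_singleton_mem : ∀ x : X, closure {x} ∈ Good)
    (sdiff_mem : ∀ Y Z : Set X, Y ⊆ Z → IsLocallyClosed Y → IsLocallyClosed Z →
      IsLocallyClosed (Z \ Y) → Y ∈ Good → Z ∈ Good → Z \ Y ∈ Good)
    (union_mem : ∀ Y Z : Set X, Y ⊆ Z → IsLocallyClosed Y → IsLocallyClosed Z →
      IsLocallyClosed (Z \ Y) → Y ∈ Good → Z \ Y ∈ Good → Z ∈ Good)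
    {S : Set X} (hS : IsClosed S) : S ∈ Good := by
  induction S using WellFoundedLT.induction with | ind S ih
  obtain rfl | hne := S.eq_empty_or_nonempty
  · exact empty_mem
  obtain ⟨x, hxS, hx⟩ := S.toFinite.exists_notMem_closure_sdiff_closure_singleton hne
  set T := S \ closure {x}
  have hxS' : closure {x} ⊆ S := hS.closure_subset_iff.2 (singleton_subset_iff.2 hxS)
  have hT : IsLocallyClosed T :=
    hS.isLocallyClosed.inter isClosed_closure.isOpen_compl.isLocallyClosed
  have hTS : closure T ⊂ S :=
    ssubset_of_subset_of_ne (hS.closure_subset_iff.2 sdiff_subset) (fun h => hx (h ▸ hxS))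
  have hTmem : T ∈ Good := mem_of_closure_mem_of_closure_sdiff_mem sdiff_mem hT
    (ih _ hTS isClosed_closure)
    (ih _ (ssubset_of_subset_of_ssubset sdiff_subset hTS) hT.isClosed_closure_sdiff)
  exact union_mem _ _ hxS' isClosed_closure.isLocallyClosed hS.isLocallyClosed hT
    (closure_singleton_mem x) hTmem

theorem stmt_3_general {X : Type*} [TopologicalSpace X] [Finite X] (Good : Set (Set X))
    (h1 : ∀ x : X, closure {x} ∈ Good)
    (h2 : ∀ Y Z : Set X, Y ⊆ Z → IsLocallyClosed Y → IsLocallyClosed Z →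
      IsLocallyClosed (Z \ Y) →
      ((Y ∈ Good → Z ∈ Good → Z \ Y ∈ Good) ∧
       (Y ∈ Good → Z \ Y ∈ Good → Z ∈ Good) ∧
       (Z ∈ Good → Z \ Y ∈ Good → Y ∈ Good)))
    (h3 : ∀ S : Set (Set X), S.Finite → S.Pairwise Disjoint →
      (∀ t ∈ S, t ∈ Good) →
      (∀ t ∈ S, ∃ V : Set X, IsOpen V ∧ t = V ∩ ⋃₀ S) →
      ⋃₀ S ∈ Good) :
    ∀ S : Set X, IsLocallyClosed S → S ∈ Good := by
  have empty_mem : ∅ ∈ Good := by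
    simpa using h3 ∅ finite_empty (by simp) (by simp) (by simp)
  have sdiff_mem := fun Y Z hYZ hY hZ hZY => (h2 Y Z hYZ hY hZ hZY).1
  have union_mem := fun Y Z hYZ hY hZ hZY => (h2 Y Z hYZ hY hZ hZY).2.1
  have closed_mem {C : Set X} (hC : IsClosed C) : C ∈ Good :=
    mem_of_isClosed empty_mem h1 sdiff_mem union_mem hC
  intro S hS
  exact mem_of_closure_mem_of_closure_sdiff_mem sdiff_mem hS (closed_mem isClosed_closure)
    (closed_mem hS.isClosed_closure_sdiff)

/-- Let `X` be a finite topological space and `Good` a collection of locally closed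
subsets of `X` such that: (1) the closure of every singleton belongs to `Good`;
(2) whenever `Y ⊆ Z` are locally closed with `Z \ Y` locally closed, if two of
`Y`, `Z`, `Z \ Y` belong to `Good`, so does the third; (3) `Good` is closed under
finite disjoint unions of relatively open pieces.  Then every locally closed subset
of `X` belongs to `Good`. -/
theorem stmt_3 {X : Type*} [TopologicalSpace X] [Finite X] (Good : Set (Set X))
    (hGood : ∀ S ∈ Good, IsLocallyClosed S)
    (h1 : ∀ x : X, closure {x} ∈ Good)
    (h2 : ∀ Y Z : Set X, Y ⊆ Z → IsLocallyClosed Y → IsLocallyClosed Z →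
      IsLocallyClosed (Z \ Y) →
      ((Y ∈ Good → Z ∈ Good → Z \ Y ∈ Good) ∧
       (Y ∈ Good → Z \ Y ∈ Good → Z ∈ Good) ∧
       (Z ∈ Good → Z \ Y ∈ Good → Y ∈ Good)))
    (h3 : ∀ S : Set (Set X), S.Finite → S.Pairwise Disjoint →
      (∀ t ∈ S, t ∈ Good) →
      (∀ t ∈ S, ∃ V : Set X, IsOpen V ∧ t = V ∩ ⋃₀ S) →
      ⋃₀ S ∈ Good) :
    ∀ S : Set X, IsLocallyClosed S → S ∈ Good :=
  stmt_3_general Good h1 h2 h3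
end

section
/- Let π: B → C be a surjective *-homomorphism of C*-algebras with kernel I, and let π̃: C_b(T,B) → C_b(T,C) be the induced map. Then the preimage π̃^{-1}(C_0(T,C)) equals C_b(T,I) + C_0(T,B). -/
/-! A *-homomorphism between C*-algebras is contractive (on self-adjoint elements the norm is the
spectral radius in the unitization, by repeated squaring), hence continuous, which gives `⇐`.
For `⇒`, the open mapping theorem yields `K` with `dist (b, ker π) ≤ K ‖π b‖`, so each
`f t` lies within `φ t := K ‖π (f t)‖ + (1 + t)⁻¹` of `ker π`. This is an open condition
on convex sets, so a partition of unity glues local constant choices into a continuous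
`g : ℝ≥0 → ker π` with `‖f t - g t‖ < φ t`; as `φ` is bounded and tends to `0`, `h := f - g`
vanishes at infinity. This replaces the Bartle–Graves section of `π`. -/

open Filter NNReal

theorem Unitization.inr_iterate_mul_self {R A : Type*} [CommSemiring R] [NonUnitalSemiring A]
    [Module R A] [IsScalarTower R A A] [SMulCommClass R A A] (a : A) (n : ℕ) :
    (((fun x => x * x)^[n] a : A) : Unitization R A) = (a : Unitization R A) ^ 2 ^ n := by
  induction n with
  | zero => simp
  | succ n ih =>
    rw [Function.iterate_succ_apply', Unitization.inr_mul, ih, ← pow_add, pow_succ, mul_two]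

section Contractive

variable {A : Type*} [NonUnitalNormedRing A] [StarRing A] [CStarRing A]

theorem IsSelfAdjoint.iterate_mul_self {R : Type*} [Mul R] [StarMul R] {a : R}
    (ha : IsSelfAdjoint a) (n : ℕ) : IsSelfAdjoint ((fun x => x * x)^[n] a) := by
  induction n with
  | zero => exact ha
  | succ n ih =>
    rw [Function.iterate_succ_apply']
    simpa [ih.star_eq] using IsSelfAdjoint.star_mul_self ((fun x => x * x)^[n] a)

theorem IsSelfAdjoint.nnnorm_iterate_mul_self {a : A} (ha : IsSelfAdjoint a) (n : ℕ) :
    ‖(fun x => x * x)^[n] a‖₊ = ‖a‖₊ ^ 2 ^ n := by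
  induction n with
  | zero => simp
  | succ n ih =>
    rw [Function.iterate_succ_apply', (ha.iterate_mul_self n).nnnorm_mul_self, ih, ← pow_mul,
      pow_succ]

variable [NormedSpace ℂ A] [CompleteSpace A] [IsScalarTower ℂ A A] [SMulCommClass ℂ A A]

theorem IsSelfAdjoint.spectralRadius_inr_eq_nnnorm {a : A} (ha : IsSelfAdjoint a) :
    spectralRadius ℂ (a : Unitization ℂ A) = ‖a‖₊ := by
  refine tendsto_nhds_unique ?_ (tendsto_const_nhds (f := atTop (α := ℕ)))
  convert (spectrum.pow_nnnorm_pow_one_div_tendsto_nhds_spectralRadius (a : Unitization ℂ A)).comp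
      (tendsto_pow_atTop_atTop_of_one_lt one_lt_two) using 1
  funext n
  rw [Function.comp_apply, ← Unitization.inr_iterate_mul_self, Unitization.nnnorm_inr,
    ha.nnnorm_iterate_mul_self, ENNReal.coe_pow, ← ENNReal.rpow_natCast, ← ENNReal.rpow_mul]
  simp

variable {B : Type*} [NonUnitalNormedRing B] [StarRing B] [CStarRing B]
    [NormedSpace ℂ B] [CompleteSpace B] [IsScalarTower ℂ B B] [SMulCommClass ℂ B B]

theorem NonUnitalStarAlgHom.nnnorm_apply_le_of_cstarRing (φ : A →⋆ₙₐ[ℂ] B) (a : A) :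
    ‖φ a‖₊ ≤ ‖a‖₊ := by
  let φ₁ : Unitization ℂ A →ₐ[ℂ] Unitization ℂ B :=
    Unitization.lift ((Unitization.inrNonUnitalAlgHom ℂ B).comp φ.toNonUnitalAlgHom)
  have selfAdjoint_le {x : A} (hx : IsSelfAdjoint x) : ‖φ x‖₊ ≤ ‖x‖₊ := by
    have h : spectralRadius ℂ (φ₁ x) ≤ spectralRadius ℂ (x : Unitization ℂ A) :=
      iSup_le_iSup_of_subset (AlgHom.spectrum_apply_subset φ₁ _)
    rw [show φ₁ x = φ x by simp [φ₁], (hx.map φ).spectralRadius_inr_eq_nnnorm,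
      hx.spectralRadius_inr_eq_nnnorm] at h
    exact_mod_cast h
  refine nonneg_le_nonneg_of_sq_le_sq zero_le ?_
  simp_rw [← CStarRing.nnnorm_star_mul_self, ← map_star, ← map_mul]
  exact selfAdjoint_le (.star_mul_self a)

end Contractive

theorem exists_continuous_mem_convex_dist_lt {X E : Type*} [TopologicalSpace X] [NormalSpace X]
    [ParacompactSpace X] [NormedAddCommGroup E] [NormedSpace ℝ E] {S : Set E}
    (hS : Convex ℝ S) {f : X → E} (hf : Continuous f) {φ : X → ℝ} (hφ : Continuous φ)
    (hfS : ∀ x, ∃ v ∈ S, dist v (f x) < φ x) :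
    ∃ g : C(X, E), ∀ x, g x ∈ S ∧ dist (g x) (f x) < φ x := by
  refine exists_continuous_forall_mem_convex_of_local_const
    (t := fun x => S ∩ Metric.ball (f x) (φ x)) (fun x => hS.inter (convex_ball _ _)) fun x => ?_
  obtain ⟨v, hvS, hv⟩ := hfS x
  have near : ∀ᶠ y in nhds x, dist v (f y) < φ y :=
    (continuous_const.dist hf).continuousAt.eventually_lt hφ.continuousAt hv
  exact ⟨v, near.mono fun y hy => ⟨hvS, hy⟩⟩

theorem ContinuousLinearMap.exists_ker_add_tendsto_zero_of_surjective {E F : Type*}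
    [NormedAddCommGroup E] [NormedSpace ℝ E] [CompleteSpace E]
    [NormedAddCommGroup F] [NormedSpace ℝ F] [CompleteSpace F]
    (π : E →L[ℝ] F) (hπ : Function.Surjective π) (f : BoundedContinuousFunction ℝ≥0 E)
    (hf : Tendsto (fun t => π (f t)) atTop (nhds 0)) :
    ∃ g h : BoundedContinuousFunction ℝ≥0 E,
      (∀ t, π (g t) = 0) ∧ Tendsto (⇑h) atTop (nhds 0) ∧ f = g + h := by
  obtain ⟨K, hK, hlift⟩ := π.exists_preimage_norm_le hπ
  set φ : ℝ≥0 → ℝ := fun t => K * ‖π (f t)‖ + (1 + (t : ℝ))⁻¹ with hφ_def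
  have hφ_cont : Continuous φ :=
    (continuous_const.mul (π.continuous.comp f.continuous).norm).add <|
      (continuous_const.add NNReal.continuous_coe).inv₀ fun t =>
        (by positivity : 1 + (t : ℝ) ≠ 0)
  have hφ_tendsto : Tendsto φ atTop (nhds 0) := by
    have hinv : Tendsto (fun t : ℝ≥0 => (1 + (t : ℝ))⁻¹) atTop (nhds 0) :=
      tendsto_inv_atTop_zero.comp <|
        tendsto_atTop_add_const_left _ _ (NNReal.tendsto_coe_atTop.mpr tendsto_id)
    simpa using (hf.norm.const_mul K).add hinv
  have hφ_le (t : ℝ≥0) : φ t ≤ K * (‖π‖ * ‖f‖) + 1 := by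
    have hπf : ‖π (f t)‖ ≤ ‖π‖ * ‖f‖ :=
      (π.le_opNorm _).trans (mul_le_mul_of_nonneg_left (f.norm_coe_le_norm t) (norm_nonneg π))
    simp only [hφ_def]
    gcongr
    exact inv_le_one_of_one_le₀ (le_add_of_nonneg_right t.coe_nonneg)
  have close_ker (t : ℝ≥0) :
      ∃ v ∈ (LinearMap.ker (π : E →ₗ[ℝ] F) : Set E), dist v (f t) < φ t := by
    obtain ⟨w, hw, hwK⟩ := hlift (π (f t))
    refine ⟨f t - w, by simp [hw], ?_⟩
    rw [dist_eq_norm, sub_sub_cancel_left, norm_neg]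
    exact hwK.trans_lt (lt_add_of_pos_right _ (by positivity))
  obtain ⟨g, hg⟩ := exists_continuous_mem_convex_dist_lt (LinearMap.ker _).convex f.continuous
    hφ_cont close_ker
  let h := BoundedContinuousFunction.ofNormedAddCommGroup (fun t => f t - g t)
    (f.continuous.sub g.continuous) (K * (‖π‖ * ‖f‖) + 1) fun t => by
      rw [← dist_eq_norm, dist_comm]; exact (hg t).2.le.trans (hφ_le t)
  refine ⟨f - h, h, fun t => ?_, ?_, (sub_add_cancel f h).symm⟩
  · simpa [h] using (hg t).1
  · refine squeeze_zero_norm (fun t => ?_) hφ_tendsto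
    simpa [h, dist_eq_norm, norm_sub_rev] using (hg t).2.le

/-- Let `π : B → C` be a surjective `*`-homomorphism of C*-algebras with kernel `I`,
and let `π̃ : C_b(T,B) → C_b(T,C)` be the induced (pointwise) map, `T = [0,∞)`.
Then `π̃⁻¹(C_0(T,C)) = C_b(T,I) + C_0(T,B)`:  a bounded continuous function `f`
satisfies `π ∘ f → 0` at infinity if and only if `f = g + h` with `g` bounded
continuous with values in `I = ker π` and `h` vanishing at infinity. -/
theorem stmt_9 {B : Type*} [NonUnitalNormedRing B] [StarRing B] [CStarRing B]
    [NormedSpace ℂ B] [CompleteSpace B] [IsScalarTower ℂ B B] [SMulCommClass ℂ B B]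
    {C : Type*} [NonUnitalNormedRing C] [StarRing C] [CStarRing C]
    [NormedSpace ℂ C] [CompleteSpace C] [IsScalarTower ℂ C C] [SMulCommClass ℂ C C]
    (π : B →⋆ₙₐ[ℂ] C) (hsurj : Function.Surjective π)
    (f : BoundedContinuousFunction ℝ≥0 B) :
    Tendsto (fun t => π (f t)) atTop (nhds 0) ↔
      ∃ g h : BoundedContinuousFunction ℝ≥0 B,
        (∀ t, π (g t) = 0) ∧ Tendsto (⇑h) atTop (nhds 0) ∧ f = g + h := by
  have hπ_cont : Continuous π := AddMonoidHomClass.continuous_of_bound π 1 fun b => by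
    rw [one_mul]; exact_mod_cast π.nnnorm_apply_le_of_cstarRing b
  constructor
  · exact (AddMonoidHom.toRealLinearMap (π : B →+ C) hπ_cont)
      |>.exists_ker_add_tendsto_zero_of_surjective hsurj f
  · rintro ⟨g, h, hg, hh, rfl⟩
    refine ((hπ_cont.tendsto' 0 0 (map_zero π)).comp hh).congr fun t => ?_
    simp [hg]
end

section
/- Let R be a ring, M an R-module which is the colimit of an inductive system (M_j)_{j∈ℕ} of projective R-modules (with structure maps M_j → M_{j+1}), and N any R-module. Then there is a natural isomorphism lim¹_j Hom_R(M_j, N) ≅ Ext¹_R(M, N). -/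
/-!
Writing `D = id - shift` on the telescope `⨁ⱼ Mⱼ`, the sequence
`0 → ⨁ⱼ Mⱼ → ⨁ⱼ Mⱼ → colim Mⱼ → 0` is exact: `D` is injective because a fixed point `x` of
the shift has `x₀ = 0` and `xₖ₊₁ = f xₖ`, and its image is spanned by the relations
`x - f x` that define the colimit. Since the `Mⱼ` are projective, this is a projective
resolution of length one, so `Ext¹(colim Mⱼ, N)` is the cokernel of `D^*` on
`Hom(⨁ⱼ Mⱼ, N) = ∏ⱼ Hom(Mⱼ, N)`, and under this identification `D^*` becomes `id - S*`.
-/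

open CategoryTheory

universe u

namespace ModuleCat

variable {R : Type u} [Ring R] {P₁ P₀ X : Type u} [AddCommGroup P₁] [Module R P₁]
  [AddCommGroup P₀] [Module R P₀] [AddCommGroup X] [Module R X]
  (d : P₁ →ₗ[R] P₀) (π : P₀ →ₗ[R] X)

noncomputable def twoTermComplex : ChainComplex (ModuleCat.{u} R) ℕ :=
  ChainComplex.of
    (fun | 0 => of R P₀ | 1 => of R P₁ | _ + 2 => of R PUnit)
    (fun | 0 => ofHom d | _ + 1 => 0)
    (fun _ => Limits.zero_comp)

lemma isZero_twoTermComplex_X (n : ℕ) :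
    Limits.IsZero ((twoTermComplex d).X (n + 2)) :=
  isZero_of_subsingleton (of R PUnit)

lemma twoTermComplex_exactAt (hd : Function.Injective d) (n : ℕ) :
    (twoTermComplex d).ExactAt (n + 1) := by
  rw [HomologicalComplex.exactAt_iff' _ (n + 2) (n + 1) n (by simp) (by simp)]
  cases n with
  | zero =>
    rw [ShortComplex.moduleCat_exact_iff]
    intro x hx
    have hdx : d x = 0 := hx
    exact ⟨0, (hd (hdx.trans (map_zero d).symm)).symm⟩
  | succ n => exact ShortComplex.exact_of_isZero_X₂ _ (isZero_twoTermComplex_X d n)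

lemma twoTermComplex_d_one_zero_comp (hexact : Function.Exact d π) :
    (twoTermComplex d).d 1 0 ≫ ofHom π = 0 := by
  ext x
  exact hexact.apply_apply_eq_zero x

noncomputable def twoTermResolution [Module.Projective R P₁] [Module.Projective R P₀]
    (hd : Function.Injective d) (hπ : Function.Surjective π) (hexact : Function.Exact d π) :
    ProjectiveResolution (of R X) where
  complex := twoTermComplex d
  projective
    | 0 => inferInstanceAs (Projective (of R P₀))
    | 1 => inferInstanceAs (Projective (of R P₁))
    | _ + 2 => inferInstanceAs (Projective (of R PUnit))
  π := (ChainComplex.toSingle₀Equiv _ _).symm ⟨ofHom π, twoTermComplex_d_one_zero_comp d π hexact⟩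
  quasiIso := ⟨fun n => by
    cases n with
    | zero =>
      rw [ChainComplex.quasiIsoAt₀_iff, ShortComplex.quasiIso_iff_of_zeros' _ rfl rfl rfl]
      exact ⟨(ShortComplex.ShortExact.moduleCat_exact_iff_function_exact _).2 hexact,
        (epi_iff_surjective _).2 hπ⟩
    | succ n =>
      rw [quasiIsoAt_iff_exactAt' _ _ (ChainComplex.exactAt_succ_single_obj _ _)]
      exact twoTermComplex_exactAt d hd n⟩

theorem exists_addMonoidHom_ext_one_of_exact [Module.Projective R P₁] [Module.Projective R P₀]
    (hd : Function.Injective d) (hπ : Function.Surjective π) (hexact : Function.Exact d π)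
    (N : Type u) [AddCommGroup N] [Module R N] :
    ∃ q : (P₁ →ₗ[R] N) →+
        ((Ext ℤ (ModuleCat.{u} R) 1).obj (Opposite.op (of R X))).obj (of R N),
      Function.Surjective q ∧ ∀ g, q g = 0 ↔ ∃ φ : P₀ →ₗ[R] N, φ ∘ₗ d = g := by
  let P := twoTermResolution d π hd hπ hexact
  let K := P.complex.linearYonedaObj ℤ (of R N)
  let S := K.sc' 0 1 2
  have hK : Limits.IsZero (K.X 2) :=
    (((linearYoneda ℤ _).obj (of R N)).rightOp.map_isZero (isZero_twoTermComplex_X d 0)).unop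
  -- `Hom(P₂, N) = 0`, so `H¹` of `Hom(P_•, N)` is the cokernel of `d^*`
  let e := P.isoExt 1 (of R N) ≪≫ K.homologyIsoSc' 0 1 2 (by simp) (by simp) ≪≫
    S.asIsoHomologyι (hK.eq_of_tgt _ _) ≪≫ S.moduleCatOpcyclesIso
  let ofHomEquiv := (homAddEquiv (M := of R P₁) (N := of R N)).symm
  refine ⟨e.toLinearEquiv.symm.toLinearMap.toAddMonoidHom.comp
    ((Submodule.mkQ _).toAddMonoidHom.comp ofHomEquiv.toAddMonoidHom), ?_, fun g => ?_⟩
  · exact e.toLinearEquiv.symm.surjective.comp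
      ((Submodule.mkQ_surjective _).comp ofHomEquiv.surjective)
  · change e.toLinearEquiv.symm (Submodule.Quotient.mk (ofHomEquiv g)) = 0 ↔ _
    rw [LinearEquiv.map_eq_zero_iff]
    refine (Submodule.Quotient.mk_eq_zero _).trans ⟨?_, ?_⟩
    · rintro ⟨φ, hφ⟩
      exact ⟨φ.hom, congrArg Hom.hom hφ⟩
    · rintro ⟨φ, rfl⟩
      exact ⟨ofHom φ, rfl⟩

end ModuleCat

namespace DirectSum

variable {R : Type*} [Ring R] {M : ℕ → Type*} [∀ j, AddCommGroup (M j)] [∀ j, Module R (M j)]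
  (f : ∀ i j, i ≤ j → M i →ₗ[R] M j)

noncomputable def telescopeShift : (⨁ j, M j) →ₗ[R] ⨁ j, M j :=
  toModule R ℕ _ fun j => lof R ℕ M (j + 1) ∘ₗ f j (j + 1) j.le_succ

@[simp]
lemma telescopeShift_lof (j : ℕ) (x : M j) :
    telescopeShift f (lof R ℕ M j x) = lof R ℕ M (j + 1) (f j (j + 1) j.le_succ x) := by
  simp [telescopeShift]

lemma telescopeShift_apply_zero (x : ⨁ j, M j) : telescopeShift f x 0 = 0 := by
  induction x using DirectSum.induction_on with
  | zero => simp
  | of j y =>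
    rw [← lof_eq_of R, telescopeShift_lof, lof_eq_of, of_eq_of_ne _ _ _ j.succ_ne_zero.symm]
  | add a b ha hb => simp [ha, hb]

lemma telescopeShift_apply_succ (x : ⨁ j, M j) (j : ℕ) :
    telescopeShift f x (j + 1) = f j (j + 1) j.le_succ (x j) := by
  induction x using DirectSum.induction_on with
  | zero => simp
  | of i y =>
    rw [← lof_eq_of R, telescopeShift_lof]
    obtain rfl | h := eq_or_ne i j
    · simp
    · simp [lof_eq_of, of_eq_of_ne, h.symm]
  | add a b ha hb => simp [ha, hb]

noncomputable def telescopeDiff : (⨁ j, M j) →ₗ[R] ⨁ j, M j :=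
  LinearMap.id - telescopeShift f

lemma telescopeDiff_lof (j : ℕ) (x : M j) :
    telescopeDiff f (lof R ℕ M j x) =
      lof R ℕ M j x - lof R ℕ M (j + 1) (f j (j + 1) j.le_succ x) := by
  simp [telescopeDiff]

lemma telescopeDiff_injective : Function.Injective (telescopeDiff f) := by
  rw [← LinearMap.ker_eq_bot, LinearMap.ker_eq_bot']
  intro x hx
  have hfix (k : ℕ) : x k = telescopeShift f x k := by
    simpa [telescopeDiff, sub_eq_zero] using congr($hx k)
  ext k
  induction k with
  | zero => rw [hfix, telescopeShift_apply_zero, zero_apply]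
  | succ k ih => rw [hfix, telescopeShift_apply_succ, ih, zero_apply, map_zero, zero_apply]

lemma toModule_directLimitOf_surjective :
    Function.Surjective (toModule R ℕ _ (Module.DirectLimit.of R ℕ M f)) := by
  intro z
  obtain ⟨i, x, rfl⟩ := Module.DirectLimit.exists_of z
  exact ⟨lof R ℕ M i x, toModule_lof R i x⟩

lemma toModule_comp_telescopeDiff {N : Type*} [AddCommGroup N] [Module R N]
    (h : ∀ j, M j →ₗ[R] N) :
    toModule R ℕ N h ∘ₗ telescopeDiff f =
      toModule R ℕ N fun j => h j - h (j + 1) ∘ₗ f j (j + 1) j.le_succ := by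
  ext j x
  simp [telescopeDiff_lof]

variable [DirectedSystem M fun i j h => f i j h]

lemma lof_sub_lof_mem_range_telescopeDiff {i j : ℕ} (hij : i ≤ j) (x : M i) :
    lof R ℕ M i x - lof R ℕ M j (f i j hij x) ∈ LinearMap.range (telescopeDiff f) := by
  induction j, hij using Nat.le_induction with
  | base =>
    rw [DirectedSystem.map_self (f := fun i j h => f i j h), sub_self]
    exact zero_mem _
  | succ j hij ih =>
    convert add_mem ih (LinearMap.mem_range_self _ (lof R ℕ M j (f i j hij x))) using 1
    rw [telescopeDiff_lof, DirectedSystem.map_map (f := fun i j h => f i j h)]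
    abel

lemma exact_telescopeDiff :
    Function.Exact (telescopeDiff f) (toModule R ℕ _ (Module.DirectLimit.of R ℕ M f)) := by
  rw [LinearMap.exact_iff]
  refine le_antisymm (fun y hy => ?_) ?_
  · let back := Module.DirectLimit.lift R ℕ M f
      (fun i => (LinearMap.range (telescopeDiff f)).mkQ ∘ₗ lof R ℕ M i)
      fun i j hij x =>
        ((Submodule.Quotient.eq _).2 (lof_sub_lof_mem_range_telescopeDiff f hij x)).symm
    have hback : back ∘ₗ toModule R ℕ _ (Module.DirectLimit.of R ℕ M f) =
        (LinearMap.range (telescopeDiff f)).mkQ := by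
      ext i x
      simp only [back, LinearMap.comp_apply, toModule_lof, Submodule.mkQ_apply]
      exact Module.DirectLimit.lift_of _ _ x
    rw [← Submodule.Quotient.mk_eq_zero, ← Submodule.mkQ_apply, ← hback, LinearMap.comp_apply,
      LinearMap.mem_ker.1 hy, map_zero]
  · rw [LinearMap.range_le_ker_iff]
    ext i x
    simp [telescopeDiff_lof, Module.DirectLimit.of_f]

end DirectSum

/-- `lim¹ⱼ Hom_R(Mⱼ, N)` is the cokernel of `id - S*`, so the isomorphism is encoded as a
surjection `q` onto `Ext¹` whose kernel is the image of `id - S*`. -/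
theorem stmt_12 {R : Type} [Ring R]
    (M : ℕ → Type) [∀ j, AddCommGroup (M j)] [∀ j, Module R (M j)]
    (f : ∀ i j : ℕ, i ≤ j → M i →ₗ[R] M j)
    [DirectedSystem M fun i j h => f i j h]
    (hproj : ∀ j, Module.Projective R (M j))
    (N : Type) [AddCommGroup N] [Module R N] :
    ∃ q : (∀ j : ℕ, M j →ₗ[R] N) →+
        ((_root_.Ext ℤ (ModuleCat.{0} R) 1).obj
          (Opposite.op (ModuleCat.of R (Module.DirectLimit M f)))).obj (ModuleCat.of R N),
      Function.Surjective q ∧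
      ∀ g : ∀ j : ℕ, M j →ₗ[R] N,
        q g = 0 ↔ ∃ h : ∀ j : ℕ, M j →ₗ[R] N,
          g = fun j => h j - (h (j + 1)).comp (f j (j + 1) (Nat.le_succ j)) := by
  open DirectSum in
  obtain ⟨q, hq, hker⟩ := ModuleCat.exists_addMonoidHom_ext_one_of_exact (telescopeDiff f)
    (toModule R ℕ _ (Module.DirectLimit.of R ℕ M f)) (telescopeDiff_injective f)
    (toModule_directLimitOf_surjective f) (exact_telescopeDiff f) N
  let toModuleEquiv : (∀ j, M j →ₗ[R] N) ≃+ ((⨁ j, M j) →ₗ[R] N) :=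
    (DFinsupp.lsum ℕ).toAddEquiv
  refine ⟨q.comp toModuleEquiv.toAddMonoidHom, hq.comp toModuleEquiv.surjective, fun g => ?_⟩
  rw [AddMonoidHom.comp_apply, hker, toModuleEquiv.surjective.exists]
  change (∃ h, toModule R ℕ N h ∘ₗ telescopeDiff f = toModule R ℕ N g) ↔ _
  simp only [toModule_comp_telescopeDiff]
  exact exists_congr fun h => toModuleEquiv.injective.eq_iff.trans eq_comm
end
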